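/- arXiv:0810.0280 — 3 statements merged into one kernel-verified Lean document; each statement's English description precedes it below -/
import Mathlib

section
/- Let (X, μ) be a measure space, n ≥ 1, and let f_0, …, f_{n−1}, g_0, …, g_{n−1} : X → ℝ be measurable functions such that every product f_i · g_j is μ-integrable. Then ∫_{X^n} det( f_i(λ_{j+1}) )_{0≤i,j≤n−1} · det( g_i(λ_{j+1}) )_{0≤i,j≤n−1} dμ(λ_1)⋯dμ(λ_n) = n! · det( ∫_X f_i(x) g_j(x) dμ(x) )_{0≤i,j≤n−1} (de Bruijn's / Andréief's integration formula). -/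
/-!
Expanding both determinants by the Leibniz formula writes the integrand as a signed sum, over
pairs of permutations `(σ, τ)`, of products `∏ⱼ f (σ j) (λⱼ) * g (τ j) (λⱼ)`, and by Fubini each
of these integrates to `∏ⱼ ∫ f (σ j) * g (τ j)`. For fixed `σ` the sum over `τ` is the Leibniz
expansion of the Gram matrix `(∫ fᵢ gⱼ)` with rows permuted by `σ`, i.e. `sign σ` times its
determinant, so each of the `n!` permutations `σ` contributes the same determinant.
-/

open MeasureTheory Equiv

namespace Matrix

variable {ι R : Type*} [Fintype ι] [DecidableEq ι] [CommRing R]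

theorem det_mul_det_eq_sum_perm_sum_perm (M N : Matrix ι ι R) :
    M.det * N.det = ∑ σ : Perm ι, ∑ τ : Perm ι,
      ((Perm.sign σ : ℤ) : R) * ((Perm.sign τ : ℤ) : R) * ∏ j, M (σ j) j * N (τ j) j := by
  rw [det_apply', det_apply', Finset.sum_mul_sum]
  refine Fintype.sum_congr _ _ fun σ => Fintype.sum_congr _ _ fun τ => ?_
  rw [Finset.prod_mul_distrib]
  ring

theorem sum_perm_sign_mul_prod_apply_perm (A : Matrix ι ι R) (σ : Perm ι) :
    ∑ τ : Perm ι, ((Perm.sign τ : ℤ) : R) * ∏ j, A (σ j) (τ j) =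
      ((Perm.sign σ : ℤ) : R) * A.det := by
  rw [← det_permute, ← det_transpose, det_apply']
  rfl

theorem sum_perm_sum_perm_sign_mul_prod (A : Matrix ι ι R) :
    ∑ σ : Perm ι, ∑ τ : Perm ι,
      ((Perm.sign σ : ℤ) : R) * ((Perm.sign τ : ℤ) : R) * ∏ j, A (σ j) (τ j) =
      (Fintype.card ι).factorial * A.det := by
  have sign_mul_self (σ : Perm ι) : ((Perm.sign σ : ℤ) : R) * ((Perm.sign σ : ℤ) : R) = 1 := by
    rw [← Int.cast_mul, ← Units.val_mul, Int.units_mul_self, Units.val_one, Int.cast_one]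
  calc _ = ∑ σ : Perm ι, ((Perm.sign σ : ℤ) : R) * ((Perm.sign σ : ℤ) : R) * A.det := by
        simp only [mul_assoc, ← Finset.mul_sum, sum_perm_sign_mul_prod_apply_perm]
    _ = _ := by
        simp only [sign_mul_self, one_mul, Finset.sum_const, Finset.card_univ,
          Fintype.card_perm, nsmul_eq_mul]

end Matrix

section Andreief

variable {ι X 𝕜 : Type*} [Fintype ι] [DecidableEq ι] [RCLike 𝕜] [MeasurableSpace X]
  {μ : Measure X} [SigmaFinite μ]

theorem integral_det_mul_det_eq_factorial_mul_det (f g : ι → X → 𝕜)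
    (hfg : ∀ i j, Integrable (fun x => f i x * g j x) μ) :
    ∫ lam : ι → X, (Matrix.of fun i j => f i (lam j)).det * (Matrix.of fun i j => g i (lam j)).det
        ∂(Measure.pi fun _ => μ) =
      ((Fintype.card ι).factorial : 𝕜) * (Matrix.of fun i j => ∫ x, f i x * g j x ∂μ).det := by
  have term_integrable (σ τ : Perm ι) : Integrable
      (fun lam : ι → X => ∏ j, f (σ j) (lam j) * g (τ j) (lam j)) (Measure.pi fun _ => μ) :=
    Integrable.fintype_prod fun j => hfg (σ j) (τ j)
  calc _ = ∫ lam : ι → X, ∑ σ : Perm ι, ∑ τ : Perm ι,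
          ((Perm.sign σ : ℤ) : 𝕜) * ((Perm.sign τ : ℤ) : 𝕜) *
            ∏ j, f (σ j) (lam j) * g (τ j) (lam j) ∂(Measure.pi fun _ => μ) := by
        simp only [Matrix.det_mul_det_eq_sum_perm_sum_perm, Matrix.of_apply]
    _ = ∑ σ : Perm ι, ∑ τ : Perm ι, ((Perm.sign σ : ℤ) : 𝕜) * ((Perm.sign τ : ℤ) : 𝕜) *
          ∏ j, ∫ x, f (σ j) x * g (τ j) x ∂μ := by
        rw [integral_finsetSum _ fun σ _ =>
          integrable_finsetSum _ fun τ _ => (term_integrable σ τ).const_mul _]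
        refine Fintype.sum_congr _ _ fun σ => ?_
        rw [integral_finsetSum _ fun τ _ => (term_integrable σ τ).const_mul _]
        refine Fintype.sum_congr _ _ fun τ => ?_
        rw [integral_const_mul, integral_fintype_prod_eq_prod (fun j x => f (σ j) x * g (τ j) x)]
    _ = _ := Matrix.sum_perm_sum_perm_sign_mul_prod (Matrix.of fun i j => ∫ x, f i x * g j x ∂μ)

end Andreief

theorem andreief_integration_formula_general
    {X : Type*} [MeasurableSpace X] (μ : Measure X) [SigmaFinite μ]
    (n : ℕ)
    (f g : Fin n → X → ℝ)
    (hfg : ∀ i j, Integrable (fun x => f i x * g j x) μ) :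
    ∫ lam : Fin n → X,
        (Matrix.det (Matrix.of fun i j : Fin n => f i (lam j))) *
          (Matrix.det (Matrix.of fun i j : Fin n => g i (lam j)))
        ∂(Measure.pi fun _ : Fin n => μ)
      = (n.factorial : ℝ) *
          Matrix.det (Matrix.of fun i j : Fin n => ∫ x, f i x * g j x ∂μ) := by
  have h := integral_det_mul_det_eq_factorial_mul_det f g hfg
  rwa [Fintype.card_fin] at h

/-- **de Bruijn's / Andréief's integration formula.**
Let `(X, μ)` be a (σ-finite) measure space, `n ≥ 1`, and let
`f₀, …, f_{n-1}, g₀, …, g_{n-1} : X → ℝ` be measurable functions such that every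
product `fᵢ · gⱼ` is `μ`-integrable.  Then
`∫_{Xⁿ} det(fᵢ(λⱼ)) det(gᵢ(λⱼ)) dμⁿ(λ) = n! · det(∫ fᵢ gⱼ dμ)`. -/
theorem andreief_integration_formula
    {X : Type*} [MeasurableSpace X] (μ : Measure X) [SigmaFinite μ]
    (n : ℕ) (hn : 1 ≤ n)
    (f g : Fin n → X → ℝ)
    (hf : ∀ i, Measurable (f i)) (hg : ∀ i, Measurable (g i))
    (hfg : ∀ i j, Integrable (fun x => f i x * g j x) μ) :
    ∫ lam : Fin n → X,
        (Matrix.det (Matrix.of fun i j : Fin n => f i (lam j))) *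
          (Matrix.det (Matrix.of fun i j : Fin n => g i (lam j)))
        ∂(Measure.pi fun _ : Fin n => μ)
      = (n.factorial : ℝ) *
          Matrix.det (Matrix.of fun i j : Fin n => ∫ x, f i x * g j x ∂μ) :=
  andreief_integration_formula_general μ n f g hfg
end

section
/- Let α and β be partitions and let i be an integer such that the partitions α−i and β+i are both well defined. Then for every integer n one has the identity (n)_{α−i} · (n)_{β+i} = n · (n+1)_α · (n−1)_β of generalized Pochhammer symbols (indeed this holds as a polynomial identity in n). -/
/-- The generalized Pochhammer symbol `(n)_κ = ∏_{i≥0} ∏_{j=1}^{κ_i} (n - i + j - 1)`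
of a partition (given by its sequence of parts `κ : ℕ → ℕ`). -/
noncomputable def gpoch (κ : ℕ → ℕ) (n : ℤ) : ℤ :=
  ∏ᶠ i : ℕ, ∏ j ∈ Finset.Icc 1 (κ i), (n - (i : ℤ) + (j : ℤ) - 1)

/-- The parts of the partition `α - i` where `i = a_{-k} = α_k - k + 1`:
namely `(α₀+1, …, α_{k-1}+1, α_{k+1}, α_{k+2}, …)`. -/
def subParts (α : ℕ → ℕ) (k : ℕ) : ℕ → ℕ :=
  fun j => if j < k then α j + 1 else α (j + 1)

/-- The parts of the partition `β + i`, where `i` is inserted at position `m`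
(so `m = 0` corresponds to the case `i > b₀` and the result `(i, β₀, β₁, …)`,
and `m = l + 1` to the case `b_{-l} > i > b_{-l-1}` and the result
`(β₀-1, …, β_l-1, i+l+1, β_{l+1}, …)`). -/
def addParts (β : ℕ → ℕ) (i : ℤ) (m : ℕ) : ℕ → ℕ :=
  fun j => if j < m then β j - 1 else if j = m then (i + m).toNat else β (j - 1)

/-!
`(x)_κ` is the product of a multiset of integers made of one interval `[x - j, x - j + κ_j)`
per row `j`. From `(n+1)_α` to `(n)_{α-i}`, the row `[n+1-k, n+i)` disappears, the rows below
it move up without changing their factors, and each row `j < k` above it gains the factor `n - j`,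
i.e. `[n+1-k, n+1)` in total. Symmetrically, from `(n-1)_β` to `(n)_{β+i}`, the row
`[n-m, n+i)` appears and the rows above it lose `[n-m, n)`. What remains is the exchange of right
endpoints `[n+1-k, n+1) + [n-m, n+i) = [n+1-k, n+i) + [n-m, n+1)` with `[n-m, n+1) = [n-m, n) + {n}`.
Working with multisets rather than products keeps the argument free of cancellations of
possibly vanishing factors.
-/

namespace Multiset

theorem Ico_add_Ico_eq_Ico_add_Ico {α : Type*} [LinearOrder α] [LocallyFiniteOrder α]
    {u v c w : α} (huc : u ≤ c) (hvc : v ≤ c) (huw : u ≤ w) (hvw : v ≤ w) :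
    Ico u c + Ico v w = Ico u w + Ico v c := by
  wlog hcw : c ≤ w generalizing c w
  · rw [add_comm, this huw hvw huc hvc (le_of_not_ge hcw), add_comm]
  rw [← Ico_add_Ico_eq_Ico hvc hcw, ← Ico_add_Ico_eq_Ico huc hcw, add_assoc,
    add_comm (Ico v c)]

section SuccAddOrder

variable {α : Type*} [LinearOrder α] [One α] [LocallyFiniteOrder α] [Add α] [SuccAddOrder α]
  [NoMaxOrder α]

theorem Ico_self_add_one (a : α) : Ico a (a + 1) = {a} := by
  rw [Ico, Finset.Ico_add_one_right_eq_Icc, Finset.Icc_self, Finset.singleton_val]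

theorem Ico_eq_singleton_add {a b : α} (h : a < b) : Ico a b = {a} + Ico (a + 1) b := by
  rw [← Ico_self_add_one, Ico_add_Ico_eq_Ico (Order.wcovBy_add_one a).le (Order.add_one_le_of_lt h)]

end SuccAddOrder

end Multiset

theorem Finset.sum_range_add_eq_of_delete {M : Type*} [AddCommMonoid M] {f g s : ℕ → M}
    {k N : ℕ} (hkN : k ≤ N) (hlt : ∀ j < k, g j = s j + f j)
    (hge : ∀ j, k ≤ j → g j = f (j + 1)) :
    ∑ j ∈ range N, g j + f k = ∑ j ∈ range k, s j + ∑ j ∈ range (N + 1), f j := by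
  induction N, hkN using Nat.le_induction with
  | base =>
    rw [sum_congr rfl fun j hj ↦ hlt j (mem_range.1 hj), sum_add_distrib, sum_range_succ,
      add_assoc]
  | succ N hkN ih =>
    rw [sum_range_succ, add_right_comm, ih, hge N hkN, sum_range_succ _ (N + 1), add_assoc]

namespace Int

theorem sum_range_singleton_sub_eq_Ico (x : ℤ) (k : ℕ) :
    ∑ j ∈ Finset.range k, ({x - 1 - j} : Multiset ℤ) = Multiset.Ico (x - k) x := by
  induction k with
  | zero => simp
  | succ k ih =>
    rw [Finset.sum_range_succ, ih, Nat.cast_succ, add_comm,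
      ← Multiset.Ico_add_Ico_eq_Ico (by omega : x - (k + 1) ≤ x - k) (by omega),
      show x - k = x - (k + 1) + 1 by ring, Multiset.Ico_self_add_one]
    congr 2
    ring

theorem prod_Icc_one_add_sub_one_eq_prod_Ico (x : ℤ) (c : ℕ) :
    ∏ j ∈ Finset.Icc 1 c, (x + j - 1) = (Multiset.Ico x (x + c)).prod := by
  induction c with
  | zero => simp
  | succ c ih =>
    rw [Finset.prod_Icc_succ_top (by omega), ih, Nat.cast_succ, ← add_assoc,
      ← Multiset.Ico_add_Ico_eq_Ico (c := x + c + 1) (by omega : x ≤ x + c) (by omega),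
      Multiset.Ico_self_add_one, Multiset.prod_add, Multiset.prod_singleton]
    ring

end Int

noncomputable def pochFactors (κ : ℕ → ℕ) (x : ℤ) (N : ℕ) : Multiset ℤ :=
  ∑ j ∈ Finset.range N, Multiset.Ico (x - j) (x - j + κ j)

theorem gpoch_eq_prod_pochFactors {κ : ℕ → ℕ} {N : ℕ} (hN : ∀ j, N ≤ j → κ j = 0) (x : ℤ) :
    gpoch κ x = (pochFactors κ x N).prod := by
  have hsupp : Function.mulSupport (fun j : ℕ ↦
      ∏ t ∈ Finset.Icc 1 (κ j), (x - (j : ℤ) + (t : ℤ) - 1)) ⊆ Finset.range N := by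
    intro j hj
    by_contra hjN
    simp_all
  rw [gpoch, pochFactors, finprod_eq_prod_of_mulSupport_subset _ hsupp, Multiset.prod_sum]
  exact Finset.prod_congr rfl fun j _ ↦ Int.prod_Icc_one_add_sub_one_eq_prod_Ico _ _

theorem pochFactors_subParts_add (α : ℕ → ℕ) {k N : ℕ} (hkN : k ≤ N) (n : ℤ) :
    pochFactors (subParts α k) n N + Multiset.Ico (n + 1 - k) (n + 1 - k + α k)
      = Multiset.Ico (n + 1 - k) (n + 1) + pochFactors α (n + 1) (N + 1) := by
  rw [pochFactors, pochFactors, ← Int.sum_range_singleton_sub_eq_Ico (n + 1) k]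
  refine Finset.sum_range_add_eq_of_delete
    (f := fun j ↦ Multiset.Ico (n + 1 - j) (n + 1 - j + α j)) hkN (fun j hj ↦ ?_) (fun j hj ↦ ?_)
  · rw [subParts, if_pos hj, Multiset.Ico_eq_singleton_add (by omega)]
    push_cast
    ring_nf
  · rw [subParts, if_neg (by omega)]
    push_cast
    ring_nf

theorem pochFactors_add_addParts (β : ℕ → ℕ) (i : ℤ) {m N : ℕ} (hmN : m ≤ N)
    (hβ : ∀ j < m, 1 ≤ β j) (n : ℤ) :
    pochFactors β (n - 1) N + Multiset.Ico (n - m) (n - m + (i + m).toNat)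
      = Multiset.Ico (n - m) n + pochFactors (addParts β i m) n (N + 1) := by
  have hrow : addParts β i m m = (i + m).toNat := by simp [addParts]
  rw [pochFactors, pochFactors, ← hrow, ← Int.sum_range_singleton_sub_eq_Ico n m]
  refine Finset.sum_range_add_eq_of_delete
    (f := fun j ↦ Multiset.Ico (n - j) (n - j + addParts β i m j)) hmN
    (fun j hj ↦ ?_) (fun j hj ↦ ?_)
  · rw [addParts, if_pos hj, Multiset.Ico_eq_singleton_add (by have := hβ j hj; omega)]
    push_cast [hβ j hj]
    ring_nf
  · rw [addParts, if_neg (by omega), if_neg (by omega)]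
    push_cast
    ring_nf

theorem pochFactors_subParts_add_pochFactors_addParts (α β : ℕ → ℕ) (i : ℤ) {k m N : ℕ}
    (hkN : k ≤ N) (hmN : m ≤ N) (hk : i = (α k : ℤ) - k + 1) (him : -(m : ℤ) ≤ i)
    (hβ : ∀ j < m, 1 ≤ β j) (n : ℤ) :
    pochFactors (subParts α k) n N + pochFactors (addParts β i m) n (N + 1)
      = {n} + pochFactors α (n + 1) (N + 1) + pochFactors β (n - 1) N := by
  have hsub := pochFactors_subParts_add α hkN n
  have hadd := pochFactors_add_addParts β i hmN hβ n
  rw [show n - m + (i + m).toNat = n + 1 - k + α k by omega] at hadd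
  have hswap := Multiset.Ico_add_Ico_eq_Ico_add_Ico (u := n + 1 - k) (v := n - m) (c := n + 1)
    (w := n + 1 - k + α k) (by omega) (by omega) (by omega) (by omega)
  have htop : Multiset.Ico (n - m) (n + 1) = Multiset.Ico (n - m) n + {n} := by
    rw [← Multiset.Ico_self_add_one, Multiset.Ico_add_Ico_eq_Ico (by omega) (by omega)]
  set X := Multiset.Ico (n + 1 - k) (n + 1 - k + α k)
  set Z := Multiset.Ico (n - m) n
  refine add_right_cancel (b := X + Z) ?_
  calc _ = (pochFactors (subParts α k) n N + X)
          + (Z + pochFactors (addParts β i m) n (N + 1)) := by abel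
    _ = pochFactors α (n + 1) (N + 1) + pochFactors β (n - 1) N
          + (Multiset.Ico (n + 1 - k) (n + 1) + Multiset.Ico (n - m) (n + 1 - k + α k)) := by
        rw [hsub, ← hadd]
        abel
    _ = _ := by
        rw [hswap, htop]
        abel

theorem gpoch_subParts_mul_gpoch_addParts_general
    (α β : ℕ → ℕ)
    (hα0 : ∃ N, ∀ j, N ≤ j → α j = 0)
    (hβ : Antitone β) (hβ0 : ∃ N, ∀ j, N ≤ j → β j = 0)
    (i : ℤ)
    -- `α - i` is well defined: `i = a_{-k} = α_k - k + 1`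
    (k : ℕ) (hk : i = (α k : ℤ) - k + 1)
    -- `β + i` is well defined, with insertion position `m`:
    -- `b_{-j} > i` for `j < m` and `i > b_{-j}` for `j ≥ m`, where `b_{-j} = β_j - j - 1`
    (m : ℕ) (hm₁ : ∀ j : ℕ, j < m → (β j : ℤ) - j - 1 > i)
    (hm₂ : ∀ j : ℕ, m ≤ j → i > (β j : ℤ) - j - 1)
    (n : ℤ) :
    gpoch (subParts α k) n * gpoch (addParts β i m) n
      = n * gpoch α (n + 1) * gpoch β (n - 1) := by
  obtain ⟨Nα, hNα⟩ := hα0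
  obtain ⟨Nβ, hNβ⟩ := hβ0
  have him : -(m : ℤ) ≤ i := by
    have := hm₂ m le_rfl
    omega
  have hβpos : ∀ j < m, 1 ≤ β j := fun j hj ↦ by
    have := hm₁ (m - 1) (by omega)
    have := hβ (show j ≤ m - 1 by omega)
    omega
  set N := Nα + Nβ + k + m
  have hsub : ∀ j, N ≤ j → subParts α k j = 0 := fun j hj ↦ by
    rw [subParts, if_neg (by omega), hNα _ (by omega)]
  have hadd : ∀ j, N + 1 ≤ j → addParts β i m j = 0 := fun j hj ↦ by
    rw [addParts, if_neg (by omega), if_neg (by omega), hNβ _ (by omega)]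
  rw [gpoch_eq_prod_pochFactors hsub, gpoch_eq_prod_pochFactors hadd,
    gpoch_eq_prod_pochFactors (N := N + 1) (fun j hj ↦ hNα j (by omega)),
    gpoch_eq_prod_pochFactors (N := N) (fun j hj ↦ hNβ j (by omega)), ← Multiset.prod_add,
    pochFactors_subParts_add_pochFactors_addParts α β i (by omega) (by omega) hk him hβpos,
    Multiset.prod_add, Multiset.prod_add, Multiset.prod_singleton]

/-- For partitions `α`, `β` and an integer `i` such that `α - i` and `β + i` are both
well defined, `(n)_{α-i} · (n)_{β+i} = n · (n+1)_α · (n-1)_β` for every integer `n`. -/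
theorem gpoch_subParts_mul_gpoch_addParts
    (α β : ℕ → ℕ)
    (hα : Antitone α) (hα0 : ∃ N, ∀ j, N ≤ j → α j = 0)
    (hβ : Antitone β) (hβ0 : ∃ N, ∀ j, N ≤ j → β j = 0)
    (i : ℤ)
    -- `α - i` is well defined: `i = a_{-k} = α_k - k + 1`
    (k : ℕ) (hk : i = (α k : ℤ) - k + 1)
    -- `β + i` is well defined, with insertion position `m`:
    -- `b_{-j} > i` for `j < m` and `i > b_{-j}` for `j ≥ m`, where `b_{-j} = β_j - j - 1`
    (m : ℕ) (hm₁ : ∀ j : ℕ, j < m → (β j : ℤ) - j - 1 > i)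
    (hm₂ : ∀ j : ℕ, m ≤ j → i > (β j : ℤ) - j - 1)
    (n : ℤ) :
    gpoch (subParts α k) n * gpoch (addParts β i m) n
      = n * gpoch α (n + 1) * gpoch β (n - 1) :=
  gpoch_subParts_mul_gpoch_addParts_general α β hα0 hβ hβ0 i k hk m hm₁ hm₂ n
end

section
/- Let R be a commutative ring, n ≥ 1, let M be an (n+1)×n matrix over R with rows indexed 0, 1, …, n, and let N be an (n−1)×n matrix over R. Then Σ_{j=0}^{n} (−1)^j · det( M^{(j)} ) · det( ⟨M_j; N⟩ ) = 0, where M^{(j)} is the n×n matrix obtained from M by deleting row j, M_j is the j-th row of M, and ⟨M_j; N⟩ is the n×n matrix whose first row is M_j and whose remaining n−1 rows are the rows of N. -/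
/-!
Expanding `det ⟨x; N⟩` along its first row writes it as `x ⬝ᵥ c` for a vector `c` depending only
on `N`, so the sum equals `(∑ⱼ (-1)ʲ det M⁽ʲ⁾ • Mⱼ) ⬝ᵥ c`. That combination of rows of `M` vanishes:
its `k`-th entry is the first-column expansion of the square matrix obtained by putting a copy
of the `k`-th column of `M` in front of `M`, which has two equal columns.
-/

namespace Matrix

variable {R : Type*} [CommRing R]

theorem sum_neg_one_pow_mul_det_submatrix_succAbove_smul_row_eq_zero {n : ℕ}
    (M : Matrix (Fin (n + 1)) (Fin n) R) :
    ∑ j : Fin (n + 1), ((-1 : R) ^ (j : ℕ) * (M.submatrix j.succAbove id).det) • M j = 0 := by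
  ext k
  let A : Matrix (Fin (n + 1)) (Fin (n + 1)) R := of fun i => Fin.cons (M i k) (M i)
  have hA : A.det = 0 := det_zero_of_column_eq (Fin.succ_ne_zero k).symm fun i => rfl
  have hminor : ∀ j : Fin (n + 1),
      A.submatrix j.succAbove Fin.succ = M.submatrix j.succAbove id := fun _ => rfl
  rw [det_succ_column_zero] at hA
  rw [Finset.sum_apply, Pi.zero_apply, ← hA]
  refine Finset.sum_congr rfl fun j _ => ?_
  rw [hminor, Pi.smul_apply, smul_eq_mul]
  simp only [A, of_apply, Fin.cons_zero]
  ring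

theorem det_of_cons_eq_dotProduct {n : ℕ} (x : Fin (n + 1) → R)
    (N : Matrix (Fin n) (Fin (n + 1)) R) :
    (of (Fin.cons x fun r => N r) : Matrix (Fin (n + 1)) (Fin (n + 1)) R).det =
      x ⬝ᵥ fun k => (-1 : R) ^ (k : ℕ) * (N.submatrix id k.succAbove).det := by
  rw [det_succ_row_zero, dotProduct]
  refine Finset.sum_congr rfl fun k _ => ?_
  simp only [of_apply, Fin.cons_zero]
  rw [mul_comm ((-1 : R) ^ (k : ℕ)) (x k), mul_assoc]
  rfl

end Matrix

/-- **Plücker-type relation among maximal minors.**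
Let `R` be a commutative ring, `n = m + 1 ≥ 1`, let `M` be an `(n+1) × n` matrix over `R`
and `N` an `(n-1) × n` matrix over `R`.  Then
`Σ_{j=0}^{n} (-1)^j · det(M⁽ʲ⁾) · det(⟨M_j; N⟩) = 0`,
where `M⁽ʲ⁾` is `M` with row `j` deleted, and `⟨M_j; N⟩` is the `n × n` matrix whose
first row is the `j`-th row of `M` and whose remaining rows are the rows of `N`. -/
theorem alternating_sum_minor_mul_det_cons_eq_zero
    (R : Type*) [CommRing R] (m : ℕ)
    (M : Matrix (Fin (m + 2)) (Fin (m + 1)) R)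
    (N : Matrix (Fin m) (Fin (m + 1)) R) :
    ∑ j : Fin (m + 2),
        (-1 : R) ^ (j : ℕ) * (M.submatrix j.succAbove id).det *
          (Matrix.of (Fin.cons (M j) (fun r => N r)) : Matrix (Fin (m + 1)) (Fin (m + 1)) R).det
      = 0 := by
  simp_rw [Matrix.det_of_cons_eq_dotProduct]
  rw [← zero_dotProduct
      (fun k : Fin (m + 1) => (-1 : R) ^ (k : ℕ) * (N.submatrix id k.succAbove).det),
    ← Matrix.sum_neg_one_pow_mul_det_submatrix_succAbove_smul_row_eq_zero M,
    sum_dotProduct]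
  simp only [smul_dotProduct, smul_eq_mul]
end
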